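/- Let C_* be the complex with C_{2n+1} = E ⊗ P and differential coming from the derivation ∂ on the graded algebra L = P(σy_1) ⊗ E(y_1^h, y_1^v)/(y_1^h y_1^v) ⊗ P(y_2^h, y_2^v) determined by ∂(y_1^h) = ∂(y_1^v) = ∂(σy_1) = 0, ∂(y_2^h) = y_1^h, ∂(y_2^v) = y_1^v. Then ∂ vanishes on all odd-degree elements of L, and the rank of ∂ : L_{2n} → L_{2n-1} equals n(n+3)/2 for all n ≥ 1. -/

import Mathlib

/-!
Write `𝔪 = (y₁ʰ, y₁ᵛ)`. Then `∂ = y₁ʰ ∂/∂y₂ʰ + y₁ᵛ ∂/∂y₂ᵛ` takes values in `𝔪` and the relation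
ideal is `𝔪²`, so the Leibniz rule gives `∂ 𝔪 ⊆ 𝔪²`; every odd-degree polynomial lies in `𝔪`.

In degree `2m` only the monomials `(σy₁)^(m-b-c) (y₂ʰ)^b (y₂ᵛ)^c` survive in `L`. Their images
under `∂` have coefficient `b` at `y₁ʰ (σy₁)^(m-b-c) (y₂ʰ)^(b-1) (y₂ᵛ)^c` and `c` at
`y₁ᵛ (σy₁)^(m-b-c) (y₂ʰ)^b (y₂ᵛ)^(c-1)`, monomials which are nonzero in `L`. Hence the images with
`(b, c) ≠ (0, 0)` are linearly independent, while `∂ (σy₁)^m = 0`, and the rank is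
`(m + 1)(m + 2)/2 - 1 = m(m + 3)/2`.
-/

/-- Weights of the generators `y₁ʰ, y₁ᵛ, σy₁, y₂ʰ, y₂ᵛ`. -/
noncomputable def stmt13w : Fin 5 → ℕ := ![1, 1, 2, 2, 2]

/-- The relations `(y₁ʰ)² = (y₁ᵛ)² = y₁ʰ y₁ᵛ = 0`. -/
noncomputable def stmt13I : Ideal (MvPolynomial (Fin 5) ℚ) :=
  Ideal.span {(MvPolynomial.X 0 : MvPolynomial (Fin 5) ℚ) ^ 2,
    (MvPolynomial.X 1) ^ 2, MvPolynomial.X 0 * MvPolynomial.X 1}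

/-- The derivation `∂` with `∂y₁ʰ = ∂y₁ᵛ = ∂(σy₁) = 0`, `∂y₂ʰ = y₁ʰ`, `∂y₂ᵛ = y₁ᵛ`. -/
noncomputable def stmt13D :
    Derivation ℚ (MvPolynomial (Fin 5) ℚ) (MvPolynomial (Fin 5) ℚ) :=
  MvPolynomial.mkDerivation ℚ
    ![0, 0, 0, MvPolynomial.X 0, MvPolynomial.X 1]

/-- The degree-`n` component of `L = P(σy₁) ⊗ E(y₁ʰ, y₁ᵛ)/(y₁ʰ y₁ᵛ) ⊗ P(y₂ʰ, y₂ᵛ)`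
inside the `ℚ`-module quotient by the relation ideal. -/
noncomputable def stmt13L (n : ℕ) :
    Submodule ℚ (MvPolynomial (Fin 5) ℚ ⧸ (stmt13I.restrictScalars ℚ)) :=
  Submodule.map (stmt13I.restrictScalars ℚ).mkQ
    (MvPolynomial.weightedHomogeneousSubmodule ℚ stmt13w n)

open MvPolynomial Finsupp

local notation "𝔪" => (Ideal.span {X 0, X 1} : Ideal (MvPolynomial (Fin 5) ℚ))

lemma stmt13D_apply (p : MvPolynomial (Fin 5) ℚ) :
    stmt13D p = X 0 * pderiv 3 p + X 1 * pderiv 4 p := by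
  have : stmt13D = (X 0 : MvPolynomial (Fin 5) ℚ) • pderiv (R := ℚ) 3
      + (X 1 : MvPolynomial (Fin 5) ℚ) • pderiv (R := ℚ) 4 := by
    refine derivation_ext fun i => ?_
    fin_cases i <;> simp [stmt13D, mkDerivation_X, pderiv_X]
  rw [this]
  rfl

lemma stmt13D_mem_span_X (p : MvPolynomial (Fin 5) ℚ) : stmt13D p ∈ 𝔪 := by
  rw [stmt13D_apply]
  exact add_mem (Ideal.mul_mem_right _ _ (Ideal.subset_span (by simp)))
    (Ideal.mul_mem_right _ _ (Ideal.subset_span (by simp)))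

lemma stmt13I_eq_sq : stmt13I = 𝔪 ^ 2 := by
  rw [pow_two, Ideal.span_pair_mul_span_pair, stmt13I, ← pow_two, ← pow_two,
    mul_comm (X 1) (X 0)]
  congr 1
  ext r
  simp only [Set.mem_insert_iff, Set.mem_singleton_iff]
  tauto

lemma stmt13D_mem_stmt13I_of_mem_span_X {p : MvPolynomial (Fin 5) ℚ} (hp : p ∈ 𝔪) :
    stmt13D p ∈ stmt13I := by
  rw [stmt13I_eq_sq, sq]
  induction hp using Submodule.span_induction with
  | mem x hx => rcases hx with rfl | rfl <;> simp [stmt13D]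
  | zero => simp
  | add x y _ _ hx hy => simpa using add_mem hx hy
  | smul r x hx ihx =>
    rw [smul_eq_mul, Derivation.leibniz, smul_eq_mul, smul_eq_mul]
    exact add_mem (Ideal.mul_mem_left _ _ ihx) (Ideal.mul_mem_mul hx (stmt13D_mem_span_X r))

lemma weight_stmt13w (d : Fin 5 →₀ ℕ) :
    weight stmt13w d = d 0 + d 1 + 2 * (d 2 + d 3 + d 4) := by
  simp [weight_apply, Finsupp.sum_fintype, Fin.sum_univ_five, stmt13w]
  ring

lemma mem_span_X_of_odd_weight {p : MvPolynomial (Fin 5) ℚ} {m : ℕ} (hm : Odd m)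
    (hp : p.IsWeightedHomogeneous stmt13w m) : p ∈ 𝔪 := by
  rw [← Set.image_pair, mem_ideal_span_X_image]
  intro d hd
  have hw := hp (MvPolynomial.mem_support_iff.mp hd)
  rw [weight_stmt13w] at hw
  by_contra! h
  simp only [Set.mem_insert_iff, Set.mem_singleton_iff, forall_eq_or_imp, forall_eq] at h
  rw [← hw, h.1, h.2, zero_add, zero_add] at hm
  exact Nat.not_odd_iff_even.mpr (even_two_mul _) hm

lemma stmt13I_eq_span_monomial : stmt13I = Ideal.span ((monomial · (1 : ℚ)) ''
    {single 0 2, single 1 2, single 0 1 + single 1 1}) := by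
  rw [stmt13I, X_pow_eq_monomial, X_pow_eq_monomial]
  simp only [Set.image_insert_eq, Set.image_singleton, X, monomial_mul, mul_one]

lemma coeff_eq_zero_of_mem_stmt13I {p : MvPolynomial (Fin 5) ℚ} (hp : p ∈ stmt13I)
    {d : Fin 5 →₀ ℕ} (hd : d 0 + d 1 ≤ 1) : coeff d p = 0 := by
  rw [stmt13I_eq_span_monomial, mem_ideal_span_monomial_image] at hp
  by_contra hne
  obtain ⟨s, hs, hle⟩ := hp d (MvPolynomial.mem_support_iff.mpr hne)
  have h0 := hle 0
  have h1 := hle 1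
  simp only [Set.mem_insert_iff, Set.mem_singleton_iff] at hs
  rcases hs with rfl | rfl | rfl <;> simp at h0 h1 <;> omega

lemma coeff_stmt13D_add_single_zero (p : MvPolynomial (Fin 5) ℚ) {d : Fin 5 →₀ ℕ}
    (hd : d 1 = 0) :
    coeff (d + single 0 1) (stmt13D p) = coeff (d + single 3 1) p * (d 3 + 1) := by
  simp [stmt13D_apply, coeff_X_mul', coeff_pderiv, hd]

lemma coeff_stmt13D_add_single_one (p : MvPolynomial (Fin 5) ℚ) {d : Fin 5 →₀ ℕ}
    (hd : d 0 = 0) :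
    coeff (d + single 1 1) (stmt13D p) = coeff (d + single 4 1) p * (d 4 + 1) := by
  simp [stmt13D_apply, coeff_X_mul', coeff_pderiv, hd]

lemma coeff_eq_zero_of_stmt13D_mem {p : MvPolynomial (Fin 5) ℚ} (hp : stmt13D p ∈ stmt13I)
    {d : Fin 5 →₀ ℕ} (h0 : d 0 = 0) (h1 : d 1 = 0) (h34 : d 3 ≠ 0 ∨ d 4 ≠ 0) :
    coeff d p = 0 := by
  rcases h34 with h3 | h4
  · obtain ⟨e, rfl⟩ : ∃ e, d = e + single 3 1 :=
      ⟨d - single 3 1, (tsub_add_cancel_of_le (single_le_iff.mpr (by omega))).symm⟩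
    simp only [Finsupp.add_apply, single_apply, Fin.reduceEq, if_false, add_zero] at h0 h1
    have h := coeff_stmt13D_add_single_zero p h1
    rw [coeff_eq_zero_of_mem_stmt13I hp (by simp [h0, h1]), eq_comm] at h
    exact (mul_eq_zero.mp h).resolve_right (by positivity)
  · obtain ⟨e, rfl⟩ : ∃ e, d = e + single 4 1 :=
      ⟨d - single 4 1, (tsub_add_cancel_of_le (single_le_iff.mpr (by omega))).symm⟩
    simp only [Finsupp.add_apply, single_apply, Fin.reduceEq, if_false, add_zero] at h0 h1
    have h := coeff_stmt13D_add_single_one p h0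
    rw [coeff_eq_zero_of_mem_stmt13I hp (by simp [h0, h1]), eq_comm] at h
    exact (mul_eq_zero.mp h).resolve_right (by positivity)

def pairsSumLE (m : ℕ) : Finset (ℕ × ℕ) :=
  (Finset.range (m + 1)).biUnion fun s => Finset.HasAntidiagonal.antidiagonal s

lemma mem_pairsSumLE {m : ℕ} {s : ℕ × ℕ} : s ∈ pairsSumLE m ↔ s.1 + s.2 ≤ m := by
  simp [pairsSumLE]

lemma card_pairsSumLE (m : ℕ) : (pairsSumLE m).card = (m + 1) * (m + 2) / 2 := by
  rw [pairsSumLE, Finset.card_biUnion]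
  · simp only [Finset.Nat.card_antidiagonal]
    have h := Finset.sum_range_succ' (fun x => x) (m + 1)
    rw [add_zero] at h
    rw [← h, Finset.sum_range_id, Nat.add_sub_cancel, mul_comm]
  · intro s _ t _ hst
    exact Finset.disjoint_left.mpr fun p hs ht =>
      hst ((Finset.HasAntidiagonal.mem_antidiagonal.mp hs).symm.trans
        (Finset.HasAntidiagonal.mem_antidiagonal.mp ht))

noncomputable def stmt13Exp (m : ℕ) (bc : ℕ × ℕ) : Fin 5 →₀ ℕ :=
  equivFunOnFinite.symm ![0, 0, m - bc.1 - bc.2, bc.1, bc.2]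

lemma stmt13Exp_injective (m : ℕ) : Function.Injective (stmt13Exp m) := by
  intro s t h
  have h3 := DFunLike.congr_fun h 3
  have h4 := DFunLike.congr_fun h 4
  simp only [stmt13Exp, equivFunOnFinite_symm_apply_apply] at h3 h4
  exact Prod.ext h3 h4

lemma weight_stmt13Exp {m : ℕ} {bc : ℕ × ℕ} (h : bc ∈ pairsSumLE m) :
    weight stmt13w (stmt13Exp m bc) = 2 * m := by
  rw [mem_pairsSumLE] at h
  simp [weight_stmt13w, stmt13Exp]
  omega

lemma stmt13Exp_eq {m : ℕ} {d : Fin 5 →₀ ℕ} (hd : weight stmt13w d = 2 * m)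
    (h0 : d 0 = 0) (h1 : d 1 = 0) : stmt13Exp m (d 3, d 4) = d := by
  rw [weight_stmt13w] at hd
  ext i
  fin_cases i <;> simp [stmt13Exp, h0, h1]
  omega

noncomputable def stmt13Dmk :
    MvPolynomial (Fin 5) ℚ →ₗ[ℚ] MvPolynomial (Fin 5) ℚ ⧸ stmt13I.restrictScalars ℚ :=
  (stmt13I.restrictScalars ℚ).mkQ ∘ₗ stmt13D.toLinearMap

lemma stmt13Dmk_eq_zero_iff {p : MvPolynomial (Fin 5) ℚ} :
    stmt13Dmk p = 0 ↔ stmt13D p ∈ stmt13I := by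
  simp [stmt13Dmk, Submodule.Quotient.mk_eq_zero]

lemma stmt13Dmk_monomial_eq_zero {d : Fin 5 →₀ ℕ}
    (h : (d 0 ≠ 0 ∨ d 1 ≠ 0) ∨ (d 3 = 0 ∧ d 4 = 0)) : stmt13Dmk (monomial d 1) = 0 := by
  rw [stmt13Dmk_eq_zero_iff]
  rcases h with h01 | ⟨h3, h4⟩
  · refine stmt13D_mem_stmt13I_of_mem_span_X ?_
    rw [← Set.image_pair, mem_ideal_span_X_image]
    intro e he
    rw [support_monomial, if_neg one_ne_zero, Finset.mem_singleton] at he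
    subst he
    simpa using h01
  · rw [stmt13D_apply]
    simp [pderiv_monomial, h3, h4]

lemma linearIndependent_stmt13Dmk (m : ℕ) :
    LinearIndependent ℚ fun s : (pairsSumLE m).erase 0 =>
      stmt13Dmk (monomial (stmt13Exp m s) 1) := by
  have hmon : LinearIndependent ℚ fun s : (pairsSumLE m).erase 0 =>
      (monomial (stmt13Exp m s) 1 : MvPolynomial (Fin 5) ℚ) := by
    have h := (basisMonomials (Fin 5) ℚ).linearIndependent.comp
      (fun s : (pairsSumLE m).erase 0 => stmt13Exp m s)
      ((stmt13Exp_injective m).comp Subtype.val_injective)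
    rw [coe_basisMonomials] at h
    exact h
  refine hmon.map (Submodule.disjoint_def.mpr fun p hp hker => ?_)
  have hsupp : (p.support : Set (Fin 5 →₀ ℕ)) ⊆
      Set.range fun s : (pairsSumLE m).erase 0 => stmt13Exp m s := by
    rwa [← mem_restrictSupport_iff, restrictSupport_eq_span, ← Set.range_comp]
  have hD := stmt13Dmk_eq_zero_iff.mp hker
  refine eq_zero_iff.mpr fun d => ?_
  by_cases hd : d ∈ p.support
  · obtain ⟨⟨⟨b, c⟩, hbc⟩, rfl⟩ := hsupp hd
    have hbc0 : b ≠ 0 ∨ c ≠ 0 := by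
      by_contra! h
      simp [h] at hbc
    exact coeff_eq_zero_of_stmt13D_mem hD (by simp [stmt13Exp]) (by simp [stmt13Exp])
      (by simpa [stmt13Exp] using hbc0)
  · exact MvPolynomial.notMem_support_iff.mp hd

lemma map_stmt13Dmk_weightedHomogeneousSubmodule (m : ℕ) :
    (weightedHomogeneousSubmodule ℚ stmt13w (2 * m)).map stmt13Dmk =
      Submodule.span ℚ (Set.range fun s : (pairsSumLE m).erase 0 =>
        stmt13Dmk (monomial (stmt13Exp m s) 1)) := by
  rw [weightedHomogeneousSubmodule_eq_finsupp_supported]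
  change (restrictSupport ℚ _).map _ = _
  rw [restrictSupport_eq_span, Submodule.map_span, Set.image_image]
  apply le_antisymm
  · rw [Submodule.span_le]
    rintro _ ⟨d, hd, rfl⟩
    show stmt13Dmk (monomial d 1) ∈ Submodule.span ℚ _
    by_cases hzero : (d 0 ≠ 0 ∨ d 1 ≠ 0) ∨ (d 3 = 0 ∧ d 4 = 0)
    · rw [stmt13Dmk_monomial_eq_zero hzero]
      exact Submodule.zero_mem _
    obtain ⟨h0, h1, h34⟩ : d 0 = 0 ∧ d 1 = 0 ∧ ¬(d 3 = 0 ∧ d 4 = 0) := by tauto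
    refine Submodule.subset_span ⟨⟨(d 3, d 4), ?_⟩, by simp only [stmt13Exp_eq hd h0 h1]⟩
    replace hd : d 0 + d 1 + 2 * (d 2 + d 3 + d 4) = 2 * m := by rwa [← weight_stmt13w]
    simp only [Finset.mem_erase, mem_pairsSumLE, ne_eq, Prod.ext_iff, Prod.fst_zero, Prod.snd_zero]
    omega
  · rw [Submodule.span_le]
    rintro _ ⟨⟨s, hs⟩, rfl⟩
    exact Submodule.subset_span ⟨_, weight_stmt13Exp (Finset.mem_of_mem_erase hs), rfl⟩

/-- The degree `−1` derivation `∂` of `L` with `∂(y₁ʰ) = ∂(y₁ᵛ) = ∂(σy₁) = 0`,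
`∂(y₂ʰ) = y₁ʰ`, `∂(y₂ᵛ) = y₁ᵛ` vanishes on all odd-degree elements of `L`, and the rank
of `∂ : L_{2n} → L_{2n-1}` equals `n(n+3)/2` for all `n ≥ 1`. -/
theorem stmt13
    (hI : ∀ p ∈ stmt13I.restrictScalars ℚ,
      stmt13D.toLinearMap p ∈ stmt13I.restrictScalars ℚ) :
    (∀ m : ℕ, Odd m →
      ∀ p ∈ MvPolynomial.weightedHomogeneousSubmodule ℚ stmt13w m,
        stmt13D.toLinearMap p ∈ stmt13I) ∧
    (∀ n : ℕ,
      Module.finrank ℚ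
        (Submodule.map
          (Submodule.mapQ (stmt13I.restrictScalars ℚ) (stmt13I.restrictScalars ℚ)
            stmt13D.toLinearMap hI)
          (stmt13L (2 * (n + 1))))
        = (n + 1) * ((n + 1) + 3) / 2) := by
  refine ⟨fun m hm p hp =>
    stmt13D_mem_stmt13I_of_mem_span_X (mem_span_X_of_odd_weight hm hp), fun n => ?_⟩
  rw [stmt13L, ← Submodule.map_comp, Submodule.mapQ_mkQ]
  change Module.finrank ℚ ((weightedHomogeneousSubmodule ℚ stmt13w _).map stmt13Dmk) = _
  rw [map_stmt13Dmk_weightedHomogeneousSubmodule,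
    finrank_span_eq_card (linearIndependent_stmt13Dmk (n + 1)), Fintype.card_coe,
    Finset.card_erase_of_mem (mem_pairsSumLE.mpr (Nat.zero_le _)), card_pairsSumLE]
  have h : (n + 1 + 1) * (n + 1 + 2) = (n + 1) * (n + 1 + 3) + 2 := by ring
  omega
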